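/- Let R be a commutative ring and let N be an R-module of finite injective dimension i. Then there exists an injective R-module E with Ext_R^i(E,N) ≠ 0. -/

import Mathlib

open CategoryTheory

universe u

/-- The `R`-module `N` admits an injective resolution `I` with `I^m = 0` for all
integers `m > j`; i.e. `N` has injective dimension at most `j`. -/
def injResBddAbove (R : Type u) [CommRing R] (N : ModuleCat.{u} R) (j : ℤ) : Prop :=
  ∃ I : InjectiveResolution N, ∀ m : ℕ, j < (m : ℤ) → Limits.IsZero (I.cocomplex.X m)

noncomputable section ExtAux
open Limits HomologicalComplex
variable {R : Type u} [CommRing R]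

noncomputable section
variable {R : Type u} [CommRing R]

/-- concrete exactness of `Hom(P_•, Y)` at degree `n+1`. -/
def exd {E : ModuleCat.{u} R} (P : ProjectiveResolution E) (Y : ModuleCat.{u} R) (n : ℕ) : Prop :=
  ∀ f : P.complex.X (n+1) ⟶ Y, P.complex.d (n+2) (n+1) ≫ f = 0 →
    ∃ g : P.complex.X n ⟶ Y, P.complex.d (n+1) n ≫ g = f

lemma exd_iff {E : ModuleCat.{u} R} (P : ProjectiveResolution E) (Y : ModuleCat.{u} R) (n : ℕ) :
    (P.complex.linearYonedaObj R Y).ExactAt (n+1) ↔ exd P Y n := by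
  rw [HomologicalComplex.exactAt_iff' _ n (n+1) (n+2) (by simp) (by simp),
    ShortComplex.moduleCat_exact_iff]
  constructor
  · intro h f hf
    obtain ⟨g, hg⟩ := h f (by
      exact hf)
    exact ⟨g, by exact hg⟩
  · intro h f hf
    obtain ⟨g, hg⟩ := h f (by
      exact hf)
    exact ⟨g, by exact hg⟩

lemma exd_of_injective {E : ModuleCat.{u} R} (P : ProjectiveResolution E)
    (J : ModuleCat.{u} R) (hJ : Injective J) (n : ℕ) : exd P J n := by
  intro f hf
  -- the complex P is exact at n+1
  have hex : ∀ x : P.complex.X (n+1), P.complex.d (n+1) n x = 0 →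
      ∃ y, P.complex.d (n+2) (n+1) y = x := by
    have := (HomologicalComplex.exactAt_iff' _ (n+2) (n+1) n (by simp) (by simp)).1
      (P.complex_exactAt_succ n)
    rw [ShortComplex.moduleCat_exact_iff] at this
    exact this
  set d : P.complex.X (n+1) ⟶ P.complex.X n := P.complex.d (n+1) n
  -- f kills ker d
  have hker : LinearMap.ker (d.hom : P.complex.X (n+1) →ₗ[R] P.complex.X n) ≤
      LinearMap.ker (f.hom : P.complex.X (n+1) →ₗ[R] J) := by
    intro x hx
    obtain ⟨y, hy⟩ := hex x hx
    have h0 : f (P.complex.d (n+2) (n+1) y) = 0 := by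
      have := congrArg (fun (φ : P.complex.X (n+2) ⟶ J) => φ y) hf
      simpa using this
    rw [LinearMap.mem_ker, ← hy]; exact h0
  -- descend to the range of d
  let g₀ : ModuleCat.of R ↥(LinearMap.range (d.hom : P.complex.X (n+1) →ₗ[R] P.complex.X n)) ⟶ J :=
    ModuleCat.ofHom ((LinearMap.ker d.hom).liftQ f.hom hker ∘ₗ
      (LinearMap.quotKerEquivRange (d.hom : P.complex.X (n+1) →ₗ[R] P.complex.X n)).symm.toLinearMap)
  have hmono : Mono (ModuleCat.ofHom
      (LinearMap.range (d.hom : P.complex.X (n+1) →ₗ[R] P.complex.X n)).subtype) := by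
    rw [ModuleCat.mono_iff_injective]
    exact Subtype.val_injective
  obtain ⟨h, hh⟩ := Injective.factors (J := J) g₀
    (ModuleCat.ofHom (LinearMap.range (d.hom : P.complex.X (n+1) →ₗ[R] P.complex.X n)).subtype)
  refine ⟨h, ?_⟩
  ext x
  have h1 : (⟨d x, LinearMap.mem_range_self _ x⟩ :
      ↥(LinearMap.range (d.hom : P.complex.X (n+1) →ₗ[R] P.complex.X n))) =
      (LinearMap.quotKerEquivRange (d.hom : P.complex.X (n+1) →ₗ[R] P.complex.X n))
        (Submodule.Quotient.mk x) := by
    apply Subtype.ext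
    simp [LinearMap.quotKerEquivRange_apply_mk]
  have := congrFun (congrArg (fun (φ : _ ⟶ J) => (φ : _ → (J : Type u))) hh)
    (⟨d x, LinearMap.mem_range_self _ x⟩ :
      ↥(LinearMap.range (d.hom : P.complex.X (n+1) →ₗ[R] P.complex.X n)))
  have h2 : h (d x) =
      g₀ ((LinearMap.quotKerEquivRange (d.hom : P.complex.X (n+1) →ₗ[R] P.complex.X n))
        (Submodule.Quotient.mk x)) := by
    rw [h1] at this
    exact this
  show h (d x) = f x
  rw [h2]
  show ((LinearMap.ker d.hom).liftQ f.hom hker ∘ₗ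
    (LinearMap.quotKerEquivRange (d.hom : P.complex.X (n+1) →ₗ[R] P.complex.X n)).symm.toLinearMap)
      ((LinearMap.quotKerEquivRange d.hom) (Submodule.Quotient.mk x)) = f x
  rw [LinearMap.comp_apply]
  rw [LinearEquiv.coe_coe, LinearEquiv.symm_apply_apply]
  simp


section chase
variable {E : ModuleCat.{u} R} (P : ProjectiveResolution E)
variable {A B C : ModuleCat.{u} R} (uu : A ⟶ B) (vv : B ⟶ C)
variable (hu : Function.Injective uu) (hv : Function.Surjective vv)
variable (hvu : ∀ a, vv (uu a) = 0) (hexact : ∀ b, vv b = 0 → ∃ a, uu a = b)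

/-- given a morphism `φ : X ⟶ B` with `φ ≫ vv = 0`, produce its factorization through `uu`. -/
def liftThru {X : ModuleCat.{u} R} (φ : X ⟶ B) (hφ : ∀ x, vv (φ x) = 0) : X ⟶ A :=
  ModuleCat.ofHom (((LinearEquiv.ofInjective (uu.hom : A →ₗ[R] B) hu).symm.toLinearMap).comp
    (LinearMap.codRestrict (LinearMap.range (uu.hom : A →ₗ[R] B)) φ.hom
      (fun x => by obtain ⟨a, ha⟩ := hexact (φ x) (hφ x); exact ⟨a, ha⟩)))

lemma liftThru_spec {X : ModuleCat.{u} R} (φ : X ⟶ B) (hφ : ∀ x, vv (φ x) = 0) (x : X) :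
    uu (liftThru uu vv hu hexact φ hφ x) = φ x := by
  show ((LinearEquiv.ofInjective (uu.hom : A →ₗ[R] B) hu)
    ((LinearEquiv.ofInjective (uu.hom : A →ₗ[R] B) hu).symm
      ⟨φ x, _⟩) : B) = φ x
  rw [LinearEquiv.apply_symm_apply]

include hu hv hvu hexact in
lemma exd_of_ses (n : ℕ) (hA : exd P A (n+1)) (hB : exd P B n) : exd P C n := by
  intro f hf
  have : Epi vv := (ModuleCat.epi_iff_surjective vv).2 hv
  -- lift f through vv
  set ft : P.complex.X (n+1) ⟶ B := Projective.factorThru f vv with hft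
  have hftv : ∀ x, vv (ft x) = f x := fun x =>
    congrArg (fun (φ : _ ⟶ C) => φ x) (Projective.factorThru_comp f vv)
  -- d ≫ ft factors through A
  have hker : ∀ y, vv ((P.complex.d (n+2) (n+1) ≫ ft) y) = 0 := by
    intro y
    have : f (P.complex.d (n+2) (n+1) y) = 0 :=
      congrArg (fun (φ : _ ⟶ C) => φ y) hf
    show vv (ft (P.complex.d (n+2) (n+1) y)) = 0
    rw [hftv, this]
  set a : P.complex.X (n+2) ⟶ A := liftThru uu vv hu hexact (P.complex.d (n+2) (n+1) ≫ ft) hker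
    with ha
  have haspec : ∀ y, uu (a y) = ft (P.complex.d (n+2) (n+1) y) :=
    fun y => liftThru_spec uu vv hu hexact _ hker y
  -- a is a cycle
  have hacyc : P.complex.d (n+3) (n+2) ≫ a = 0 := by
    ext y
    apply hu
    show uu (a (P.complex.d (n+3) (n+2) y)) = uu 0
    rw [haspec]
    have h2 : P.complex.d (n+2) (n+1) (P.complex.d (n+3) (n+2) y) = 0 := by
      show (P.complex.d (n+3) (n+2) ≫ P.complex.d (n+2) (n+1)) y = 0
      rw [P.complex.d_comp_d]
      rfl
    rw [h2]
    simp
  obtain ⟨a', ha'⟩ := hA a hacyc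
  -- ft - uu ∘ a' is a cycle in B
  have hsub : P.complex.d (n+2) (n+1) ≫ (ft - a' ≫ uu) = 0 := by
    ext y
    show ft (P.complex.d (n+2) (n+1) y) - uu (a' (P.complex.d (n+2) (n+1) y)) = 0
    have : a' (P.complex.d (n+2) (n+1) y) = a y :=
      congrArg (fun (φ : _ ⟶ A) => φ y) ha'
    rw [this, haspec, sub_self]
  obtain ⟨g, hg⟩ := hB (ft - a' ≫ uu) hsub
  refine ⟨g ≫ vv, ?_⟩
  ext y
  show vv (g (P.complex.d (n+1) n y)) = f y
  have : g (P.complex.d (n+1) n y) = ft y - uu (a' y) :=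
    congrArg (fun (φ : _ ⟶ B) => φ y) hg
  rw [this, map_sub, hvu, sub_zero, hftv]

end chase

section split
variable {E : ModuleCat.{u} R} (P : ProjectiveResolution E)
variable {A B : ModuleCat.{u} R} (uu : A ⟶ B) (vv : B ⟶ E)
variable (hu : Function.Injective uu) (hv : Function.Surjective vv)
variable (hvu : ∀ a, vv (uu a) = 0) (hexact : ∀ b, vv b = 0 → ∃ a, uu a = b)

include hu hv hvu hexact in
lemma splitting_of_exd (hA : exd P A 0) :
    ∃ σ : E ⟶ B, σ ≫ vv = 𝟙 E := by
  have hvepi : Epi vv := (ModuleCat.epi_iff_surjective vv).2 hv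
  set p : P.complex.X 0 ⟶ E := P.π.f 0 with hp
  have hpd : P.complex.d 1 0 ≫ p = 0 := P.complex_d_comp_π_f_zero
  have hpsurj : Function.Surjective p := by
    exact (ModuleCat.epi_iff_surjective (P.π.f 0)).1 inferInstance
  -- ker p ⊆ range d₁
  have hkerp : ∀ x : P.complex.X 0, p x = 0 → ∃ y, P.complex.d 1 0 y = x := by
    intro x hx
    set q : P.complex.X 0 ⟶ ModuleCat.of R
      (P.complex.X 0 ⧸ LinearMap.range ((P.complex.d 1 0).hom :
        P.complex.X 1 →ₗ[R] P.complex.X 0)) :=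
      ModuleCat.ofHom (LinearMap.range ((P.complex.d 1 0).hom :
        P.complex.X 1 →ₗ[R] P.complex.X 0)).mkQ with hq
    have hdq : P.complex.d 1 0 ≫ q = 0 := by
      ext y
      show (LinearMap.range ((P.complex.d 1 0).hom :
        P.complex.X 1 →ₗ[R] P.complex.X 0)).mkQ (P.complex.d 1 0 y) = 0
      rw [Submodule.mkQ_apply, Submodule.Quotient.mk_eq_zero]
      exact LinearMap.mem_range_self _ y
    obtain ⟨l, hl⟩ := CokernelCofork.IsColimit.desc' P.isColimitCokernelCofork q hdq
    have h3 : p ≫ l = q := hl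
    have : q x = l (p x) := by
      have h4 := congrArg (fun (φ : P.complex.X 0 ⟶ ModuleCat.of R
        (P.complex.X 0 ⧸ LinearMap.range ((P.complex.d 1 0).hom :
          P.complex.X 1 →ₗ[R] P.complex.X 0))) => φ x) h3
      exact h4.symm
    rw [hx] at this; erw [map_zero] at this
    have hx2 : x ∈ LinearMap.range ((P.complex.d 1 0).hom :
        P.complex.X 1 →ₗ[R] P.complex.X 0) := by
      rw [← Submodule.Quotient.mk_eq_zero]
      exact this
    exact hx2
  -- lift p through vv
  set pt : P.complex.X 0 ⟶ B := Projective.factorThru p vv with hpt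
  have hptv : ∀ x, vv (pt x) = p x := fun x =>
    congrArg (fun (φ : _ ⟶ E) => φ x) (Projective.factorThru_comp p vv)
  have hker : ∀ y, vv ((P.complex.d 1 0 ≫ pt) y) = 0 := by
    intro y
    show vv (pt (P.complex.d 1 0 y)) = 0
    rw [hptv]
    exact congrArg (fun (φ : _ ⟶ E) => φ y) hpd
  set a : P.complex.X 1 ⟶ A := liftThru uu vv hu hexact (P.complex.d 1 0 ≫ pt) hker with ha
  have haspec : ∀ y, uu (a y) = pt (P.complex.d 1 0 y) :=
    fun y => liftThru_spec uu vv hu hexact _ hker y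
  have hacyc : P.complex.d 2 1 ≫ a = 0 := by
    ext y
    apply hu
    show uu (a (P.complex.d 2 1 y)) = uu 0
    rw [haspec]
    have h2 : P.complex.d 1 0 (P.complex.d 2 1 y) = 0 := by
      show (P.complex.d 2 1 ≫ P.complex.d 1 0) y = 0
      rw [P.complex.d_comp_d]
      rfl
    rw [h2]
    simp
  obtain ⟨a', ha'⟩ := hA a hacyc
  set g : P.complex.X 0 ⟶ B := pt - a' ≫ uu with hg
  have hgd : ∀ y, g (P.complex.d 1 0 y) = 0 := by
    intro y
    show pt (P.complex.d 1 0 y) - uu (a' (P.complex.d 1 0 y)) = 0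
    have : a' (P.complex.d 1 0 y) = a y := congrArg (fun (φ : _ ⟶ A) => φ y) ha'
    rw [this, haspec, sub_self]
  have hvg : ∀ x, vv (g x) = p x := by
    intro x
    show vv (pt x - uu (a' x)) = p x
    rw [map_sub, hvu, sub_zero, hptv]
  -- g kills ker p
  have hgker : LinearMap.ker (p.hom : P.complex.X 0 →ₗ[R] E) ≤
      LinearMap.ker (g.hom : P.complex.X 0 →ₗ[R] B) := by
    intro x hx
    obtain ⟨y, hy⟩ := hkerp x hx
    show g x = 0
    rw [← hy]
    exact hgd y
  set e := LinearMap.quotKerEquivOfSurjective (p.hom : P.complex.X 0 →ₗ[R] E) hpsurj with he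
  refine ⟨ModuleCat.ofHom (((LinearMap.ker (p.hom : P.complex.X 0 →ₗ[R] E)).liftQ
    (g.hom : P.complex.X 0 →ₗ[R] B) hgker).comp e.symm.toLinearMap), ?_⟩
  ext z
  obtain ⟨x, rfl⟩ := hpsurj z
  have hex : e (Submodule.Quotient.mk x) = p x := by
    simp [he, LinearMap.quotKerEquivOfSurjective, LinearMap.quotKerEquivRange_apply_mk]
  show vv (((LinearMap.ker (p.hom : P.complex.X 0 →ₗ[R] E)).liftQ
    (g.hom : P.complex.X 0 →ₗ[R] B) hgker) (e.symm (p x))) = p x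
  rw [← hex, LinearEquiv.symm_apply_apply, Submodule.liftQ_apply]
  exact hvg x
end split


lemma injective_of_isZero (X : ModuleCat.{u} R) (h : IsZero X) : Injective X where
  factors g f _ := ⟨h.from_ _, h.eq_of_tgt _ _⟩

/-- a subsingleton module has an injective resolution that vanishes everywhere. -/
lemma zeroResolution (N : ModuleCat.{u} R) (h : Subsingleton N) :
    ∃ J : InjectiveResolution N, ∀ m : ℕ, IsZero (J.cocomplex.X m) := by
  have hz : IsZero N := ModuleCat.isZero_of_subsingleton N
  have hzx : ∀ m : ℕ, IsZero (((CochainComplex.single₀ (ModuleCat.{u} R)).obj N).X m) := by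
    intro m
    cases m with
    | zero => simpa using hz
    | succ n => exact HomologicalComplex.isZero_single_obj_X _ 0 N (n+1) (by simp)
  refine ⟨⟨(CochainComplex.single₀ (ModuleCat.{u} R)).obj N,
    fun n => injective_of_isZero _ (hzx n), 𝟙 _, inferInstance⟩, fun m => hzx m⟩


section trunc
variable {N : ModuleCat.{u} R} (I : InjectiveResolution N) (t : ℕ)

/-- the submodules defining the truncated resolution -/
def jker (m : ℕ) : Submodule R (I.cocomplex.X m) :=
  if m < t then ⊤ else if m = t then
    LinearMap.ker ((I.cocomplex.d m (m+1)).hom : I.cocomplex.X m →ₗ[R] I.cocomplex.X (m+1))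
  else ⊥

lemma jker_lt {m : ℕ} (h : m < t) : jker I t m = ⊤ := if_pos h
lemma jker_eq : jker I t t = LinearMap.ker
    ((I.cocomplex.d t (t+1)).hom : I.cocomplex.X t →ₗ[R] I.cocomplex.X (t+1)) := by
  simp [jker]
lemma jker_gt {m : ℕ} (h : t < m) : jker I t m = ⊥ := by
  rw [jker, if_neg (by omega), if_neg (by omega)]

lemma jker_d_mem (m : ℕ) (x : I.cocomplex.X m) (hx : x ∈ jker I t m) :
    I.cocomplex.d m (m+1) x ∈ jker I t (m+1) := by
  rcases lt_trichotomy (m+1) t with h | h | h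
  · rw [jker_lt I t h]; trivial
  · rw [← h] at *
    rw [jker_eq]
    show I.cocomplex.d (m+1) (m+2) (I.cocomplex.d m (m+1) x) = 0
    show (I.cocomplex.d m (m+1) ≫ I.cocomplex.d (m+1) (m+2)) x = 0
    rw [I.cocomplex.d_comp_d]; rfl
  · rw [jker_gt I t h]
    rcases lt_trichotomy m t with h2 | h2 | h2
    · omega
    · subst h2
      rw [jker_eq] at hx
      show I.cocomplex.d m (m+1) x = 0
      exact hx
    · rw [jker_gt I t h2] at hx
      simp only [Submodule.mem_bot] at hx ⊢
      rw [hx, map_zero]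

/-- the truncated cochain complex -/
def jcomplex : CochainComplex (ModuleCat.{u} R) ℕ :=
  CochainComplex.of (fun m => ModuleCat.of R ↥(jker I t m))
    (fun m => ModuleCat.ofHom
      ((((I.cocomplex.d m (m+1)).hom : I.cocomplex.X m →ₗ[R] I.cocomplex.X (m+1)).restrict
        (jker_d_mem I t m))))
    (fun m => by
      ext x
      show I.cocomplex.d (m+1) (m+2) (I.cocomplex.d m (m+1) x.val) = 0
      show (I.cocomplex.d m (m+1) ≫ I.cocomplex.d (m+1) (m+2)) x.val = 0
      rw [I.cocomplex.d_comp_d]; rfl)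

lemma jcomplex_isZero {m : ℕ} (h : t < m) : IsZero ((jcomplex I t).X m) := by
  have : Subsingleton ↥(jker I t m) := by rw [jker_gt I t h]; infer_instance
  exact @ModuleCat.isZero_of_subsingleton R _ (ModuleCat.of R ↥(jker I t m)) this

lemma jcomplex_injective (hK : Injective (ModuleCat.of R ↥(LinearMap.ker
    ((I.cocomplex.d t (t+1)).hom : I.cocomplex.X t →ₗ[R] I.cocomplex.X (t+1)))))
    (m : ℕ) : Injective ((jcomplex I t).X m) := by
  rcases lt_trichotomy m t with h | h | h
  · have e : (↥(jker I t m)) ≃ₗ[R] I.cocomplex.X m :=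
      (LinearEquiv.ofEq _ _ (jker_lt I t h)).trans (Submodule.topEquiv)
    have h2 : Injective (ModuleCat.of R ↥(jker I t m)) :=
      Injective.of_iso e.toModuleIso.symm (I.injective m)
    exact h2
  · subst h
    have e : (↥(jker I m m)) ≃ₗ[R] ↥(LinearMap.ker
        ((I.cocomplex.d m (m+1)).hom : I.cocomplex.X m →ₗ[R] I.cocomplex.X (m+1))) :=
      LinearEquiv.ofEq _ _ (jker_eq I m)
    have h2 : Injective (ModuleCat.of R ↥(jker I m m)) :=
      Injective.of_iso e.toModuleIso.symm hK
    exact h2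
  · exact injective_of_isZero _ (jcomplex_isZero I t h)

lemma jcomplex_d (m : ℕ) : (jcomplex I t).d m (m+1) = ModuleCat.ofHom
    ((((I.cocomplex.d m (m+1)).hom : I.cocomplex.X m →ₗ[R] I.cocomplex.X (m+1)).restrict
      (jker_d_mem I t m))) :=
  by unfold jcomplex; exact CochainComplex.of_d (V := ModuleCat.{u} R) _ (fun m => ModuleCat.ofHom
    (((I.cocomplex.d m (m+1)).hom).restrict (jker_d_mem I t m))) m

lemma I_exact_elem (n : ℕ) : ∀ x : I.cocomplex.X (n+1),
    I.cocomplex.d (n+1) (n+2) x = 0 → ∃ y, I.cocomplex.d n (n+1) y = x := by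
  have := (HomologicalComplex.exactAt_iff' I.cocomplex n (n+1) (n+2) (by simp) (by simp)).1
    (I.cocomplex_exactAt_succ n)
  rw [ShortComplex.moduleCat_exact_iff] at this
  exact this

lemma ker_sub_range (x : I.cocomplex.X 0) (hx : I.cocomplex.d 0 1 x = 0) :
    ∃ y : N, I.ι.f 0 y = x := by
  have hmem : x ∈ LinearMap.ker ((I.cocomplex.d 0 1).hom :
      I.cocomplex.X 0 →ₗ[R] I.cocomplex.X 1) := hx
  obtain ⟨l, hl⟩ := KernelFork.IsLimit.lift' I.isLimitKernelFork
    (ModuleCat.ofHom (LinearMap.ker ((I.cocomplex.d 0 1).hom :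
      I.cocomplex.X 0 →ₗ[R] I.cocomplex.X 1)).subtype)
    (by
      ext z
      show I.cocomplex.d 0 1 z.val = 0
      exact z.2)
  refine ⟨l ⟨x, hmem⟩, ?_⟩
  have h3 : l ≫ I.ι.f 0 = ModuleCat.ofHom (LinearMap.ker ((I.cocomplex.d 0 1).hom :
      I.cocomplex.X 0 →ₗ[R] I.cocomplex.X 1)).subtype := by exact hl
  exact congrArg (fun (φ : ModuleCat.of R ↥(LinearMap.ker ((I.cocomplex.d 0 1).hom :
      I.cocomplex.X 0 →ₗ[R] I.cocomplex.X 1)) ⟶ I.cocomplex.X 0) => φ ⟨x, hmem⟩) h3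

lemma truncatedResolution (hK : Injective (ModuleCat.of R ↥(LinearMap.ker
    ((I.cocomplex.d t (t+1)).hom : I.cocomplex.X t →ₗ[R] I.cocomplex.X (t+1))))) :
    ∃ J : InjectiveResolution N, ∀ m : ℕ, t < m → IsZero (J.cocomplex.X m) := by
  have hmem0 : ∀ y : N, I.ι.f 0 y ∈ jker I t 0 := by
    intro y
    rcases Nat.lt_or_ge 0 t with h | h
    · rw [jker_lt I t h]; trivial
    · have h0 : t = 0 := by omega
      rw [h0, jker_eq]
      show I.cocomplex.d 0 1 (I.ι.f 0 y) = 0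
      show (I.ι.f 0 ≫ I.cocomplex.d 0 1) y = 0
      rw [I.ι_f_zero_comp_complex_d]; rfl
  set f₀ : N ⟶ (jcomplex I t).X 0 :=
    ModuleCat.ofHom (LinearMap.codRestrict (jker I t 0) (I.ι.f 0).hom hmem0) with hf₀
  have hw : f₀ ≫ (jcomplex I t).d 0 1 = 0 := by
    rw [jcomplex_d]
    ext y
    apply Subtype.ext
    show I.cocomplex.d 0 1 (I.ι.f 0 y) = 0
    show (I.ι.f 0 ≫ I.cocomplex.d 0 1) y = 0
    rw [I.ι_f_zero_comp_complex_d]; rfl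
  set ι : (CochainComplex.single₀ (ModuleCat.{u} R)).obj N ⟶ jcomplex I t :=
    (CochainComplex.fromSingle₀Equiv (jcomplex I t) N).symm ⟨f₀, hw⟩ with hι
  have hι0 : ι.f 0 = f₀ := CochainComplex.fromSingle₀Equiv_symm_apply_f_zero f₀ hw
  have hqis : QuasiIso ι := by
    rw [quasiIso_iff]
    intro n
    cases n with
    | zero =>
      rw [CochainComplex.quasiIsoAt₀_iff, ShortComplex.quasiIso_iff_of_zeros]
      · constructor
        · rw [ShortComplex.moduleCat_exact_iff]
          intro x hx
          have hx' : (jcomplex I t).d 0 1 x = 0 := hx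
          have hx'' : I.cocomplex.d 0 1 x.val = 0 := by
            have h5 : (I.cocomplex.d 0 1) x.val = (((jcomplex I t).d 0 1) x).val := by
              rw [jcomplex_d]; rfl
            rw [h5, hx']; rfl
          obtain ⟨y, hy⟩ := ker_sub_range I x.val hx''
          refine ⟨y, ?_⟩
          show ι.f 0 y = x
          rw [hι0]
          apply Subtype.ext
          exact hy
        · show Mono (ι.f 0)
          rw [ModuleCat.mono_iff_injective, hι0]
          intro a b hab
          have : I.ι.f 0 a = I.ι.f 0 b := congrArg Subtype.val hab
          have hmono : Mono (I.ι.f 0) := inferInstance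
          rw [ModuleCat.mono_iff_injective] at hmono
          exact hmono this
      · rfl
      · rfl
      · rfl
    | succ n =>
      rw [quasiIsoAt_iff_exactAt _ _ (CochainComplex.exactAt_succ_single_obj _ _)]
      rw [HomologicalComplex.exactAt_iff' _ n (n+1) (n+2) (by simp) (by simp),
        ShortComplex.moduleCat_exact_iff]
      intro x hx
      have hx' : (jcomplex I t).d (n+1) (n+2) x = 0 := hx
      have hx'' : I.cocomplex.d (n+1) (n+2) x.val = 0 := by
        have h5 : (I.cocomplex.d (n+1) (n+2)) x.val = (((jcomplex I t).d (n+1) (n+2)) x).val := by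
          rw [jcomplex_d]; rfl
        rw [h5, hx']; rfl
      rcases Nat.lt_or_ge t (n+1) with h | h
      · have hx0 : x.val = 0 := by
          have : x.val ∈ (⊥ : Submodule R (I.cocomplex.X (n+1))) := by
            rw [← jker_gt I t h]; exact x.2
          simpa using this
        refine ⟨0, ?_⟩
        show (jcomplex I t).d n (n+1) 0 = x
        rw [map_zero]
        apply Subtype.ext
        show (0 : ↥(jker I t (n+1))).val = x.val
        rw [hx0]; rfl
      · obtain ⟨y, hy⟩ := I_exact_elem I n x.val hx''
        refine ⟨⟨y, by rw [jker_lt I t (by omega)]; trivial⟩, ?_⟩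
        show (jcomplex I t).d n (n+1) _ = x
        rw [jcomplex_d]
        apply Subtype.ext
        show I.cocomplex.d n (n+1) y = x.val
        exact hy
  refine ⟨⟨jcomplex I t, jcomplex_injective I t hK, ι, hqis⟩, fun m hm => jcomplex_isZero I t hm⟩
end trunc

section glue
variable {R : Type u} [CommRing R]

lemma exd_of_iso {E : ModuleCat.{u} R} (P : ProjectiveResolution E)
    {Y Y' : ModuleCat.{u} R} (e : Y ≅ Y') (n : ℕ) (h : exd P Y n) : exd P Y' n := by
  intro f hf
  obtain ⟨g, hg⟩ := h (f ≫ e.inv) (by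
    rw [← Category.assoc, hf, zero_comp])
  refine ⟨g ≫ e.hom, ?_⟩
  rw [← Category.assoc, hg, Category.assoc, Iso.inv_hom_id, Category.comp_id]

lemma injective_of_retract {A B : ModuleCat.{u} R} (r : B ⟶ A) (s : A ⟶ B)
    (hrs : s ≫ r = 𝟙 A) (hB : Injective B) : Injective A where
  factors := by
    intro X Y g f hf
    obtain ⟨h, hh⟩ := Injective.factors (g ≫ s) f
    exact ⟨h ≫ r, by rw [← Category.assoc, hh, Category.assoc, hrs, Category.comp_id]⟩

variable {N : ModuleCat.{u} R} (I : InjectiveResolution N)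

/-- the inclusion of the `j`-th kernel -/
def kerIncl (j : ℕ) : ModuleCat.of R ↥(LinearMap.ker
    ((I.cocomplex.d j (j+1)).hom : I.cocomplex.X j →ₗ[R] I.cocomplex.X (j+1))) ⟶ I.cocomplex.X j :=
  ModuleCat.ofHom (LinearMap.ker
    ((I.cocomplex.d j (j+1)).hom : I.cocomplex.X j →ₗ[R] I.cocomplex.X (j+1))).subtype

lemma kerProj_mem (j : ℕ) (x : I.cocomplex.X j) :
    I.cocomplex.d j (j+1) x ∈ LinearMap.ker
      ((I.cocomplex.d (j+1) (j+2)).hom : I.cocomplex.X (j+1) →ₗ[R] I.cocomplex.X (j+2)) := by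
  show I.cocomplex.d (j+1) (j+2) (I.cocomplex.d j (j+1) x) = 0
  show (I.cocomplex.d j (j+1) ≫ I.cocomplex.d (j+1) (j+2)) x = 0
  rw [I.cocomplex.d_comp_d]; rfl

/-- the corestricted differential onto the next kernel -/
def kerProj (j : ℕ) : I.cocomplex.X j ⟶ ModuleCat.of R ↥(LinearMap.ker
    ((I.cocomplex.d (j+1) (j+2)).hom : I.cocomplex.X (j+1) →ₗ[R] I.cocomplex.X (j+2))) :=
  ModuleCat.ofHom (LinearMap.codRestrict _
    ((I.cocomplex.d j (j+1)).hom : I.cocomplex.X j →ₗ[R] I.cocomplex.X (j+1)) (kerProj_mem I j))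

lemma kerIncl_injective (j : ℕ) : Function.Injective (kerIncl I j) :=
  Subtype.val_injective

lemma kerProj_surjective (j : ℕ) : Function.Surjective (kerProj I j) := by
  rintro ⟨y, hy⟩
  obtain ⟨x, hx⟩ := I_exact_elem I j y hy
  exact ⟨x, Subtype.ext hx⟩

lemma kerProj_kerIncl (j : ℕ) (a : ModuleCat.of R ↥(LinearMap.ker
    ((I.cocomplex.d j (j+1)).hom : I.cocomplex.X j →ₗ[R] I.cocomplex.X (j+1)))) :
    kerProj I j (kerIncl I j a) = 0 := by
  apply Subtype.ext
  exact a.2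

lemma kerProj_exact (j : ℕ) (b : I.cocomplex.X j) (hb : kerProj I j b = 0) :
    ∃ a, kerIncl I j a = b := by
  have : I.cocomplex.d j (j+1) b = 0 := congrArg Subtype.val hb
  exact ⟨⟨b, this⟩, rfl⟩

lemma exd_ker_chain {E : ModuleCat.{u} R} (P : ProjectiveResolution E) (t : ℕ)
    (h0 : exd P (ModuleCat.of R ↥(LinearMap.ker
      ((I.cocomplex.d 0 1).hom : I.cocomplex.X 0 →ₗ[R] I.cocomplex.X 1))) t) :
    ∀ j, j ≤ t → exd P (ModuleCat.of R ↥(LinearMap.ker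
      ((I.cocomplex.d j (j+1)).hom : I.cocomplex.X j →ₗ[R] I.cocomplex.X (j+1)))) (t - j) := by
  intro j
  induction j with
  | zero => intro _; simpa using h0
  | succ j ih =>
    intro hj
    have hA := ih (by omega)
    have hcast : t - j = (t - (j+1)) + 1 := by omega
    rw [hcast] at hA
    exact exd_of_ses P (kerIncl I j) (kerProj I j) (kerIncl_injective I j)
      (kerProj_surjective I j) (kerProj_kerIncl I j) (kerProj_exact I j)
      (t - (j+1)) hA (exd_of_injective P _ (I.injective j) _)
end glue

end
end ExtAux

/-- Let `R` be a commutative ring and let `N` be an `R`-module of finite injective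
dimension exactly `i` (no injective resolution of `N` is bounded above by `i - 1`, but one
is bounded above by `i`).  Then there exists an injective `R`-module `E` with
`Ext_R^i(E,N) ≠ 0`. -/
theorem exists_injective_ext_ne_zero
    (R : Type u) [CommRing R] (N : ModuleCat.{u} R) (i : ℕ)
    (hle : injResBddAbove R N (i : ℤ))
    (hlt : ¬ injResBddAbove R N ((i : ℤ) - 1)) :
    ∃ E : ModuleCat.{u} R, Injective E ∧
      ¬ Subsingleton (((Ext R (ModuleCat.{u} R) i).obj (Opposite.op E)).obj N) := by
  open Limits HomologicalComplex in
  obtain ⟨I, hI⟩ := hle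
  cases i with
  | zero =>
    have hNS : ¬ Subsingleton N := by
      intro h
      obtain ⟨J, hJ⟩ := zeroResolution N h
      exact hlt ⟨J, fun m _ => hJ m⟩
    have hM1 : IsZero (I.cocomplex.X 1) := hI 1 (by norm_num)
    have hδ0 : I.cocomplex.d 0 1 = 0 := hM1.eq_of_tgt _ _
    have hsurj : ∀ x : I.cocomplex.X 0, ∃ y : N, I.ι.f 0 y = x := by
      intro x
      refine ker_sub_range I x ?_
      rw [hδ0]; rfl
    refine ⟨I.cocomplex.X 0, I.injective 0, ?_⟩
    intro hs
    set P := ProjectiveResolution.of (I.cocomplex.X 0) with hP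
    have hzero : IsZero (((Ext R (ModuleCat.{u} R) 0).obj
        (Opposite.op (I.cocomplex.X 0))).obj N) :=
      @ModuleCat.isZero_of_subsingleton R _ _ hs
    have hz : IsZero ((P.complex.linearYonedaObj R N).homology 0) :=
      IsZero.of_iso hzero (P.isoExt 0 N).symm
    have hex := (HomologicalComplex.exactAt_iff_isZero_homology _ 0).2 hz
    rw [HomologicalComplex.exactAt_iff' _ 0 0 1 (by simp) (by simp),
      ShortComplex.moduleCat_exact_iff] at hex
    have hmono : Mono (I.ι.f 0) := inferInstance
    have hηinj : Function.Injective (I.ι.f 0) := (ModuleCat.mono_iff_injective _).1 hmono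
    set e := LinearEquiv.ofBijective ((show N ⟶ I.cocomplex.X 0 from I.ι.f 0).hom : N →ₗ[R] I.cocomplex.X 0)
      ⟨hηinj, fun x => hsurj x⟩ with he
    set f : P.complex.X 0 ⟶ N := P.π.f 0 ≫ ModuleCat.ofHom e.symm.toLinearMap with hf
    have hcyc : P.complex.d 1 0 ≫ f = 0 := by
      rw [hf]
      exact (Category.assoc _ _ _).symm.trans (by rw [P.complex_d_comp_π_f_zero]; exact zero_comp)
    obtain ⟨x₁, hx₁⟩ := hex f (by exact hcyc)
    have hf0 : f = 0 := by
      rw [← hx₁]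
      have hd00 : (sc' (P.complex.linearYonedaObj R N) 0 0 1).f =
          (P.complex.linearYonedaObj R N).d 0 0 := rfl
      rw [hd00, (P.complex.linearYonedaObj R N).shape 0 0 (by simp)]
      rfl
    have : Nontrivial N := not_subsingleton_iff_nontrivial.1 hNS
    obtain ⟨y, hy⟩ := exists_ne (0 : N)
    have hπs : Function.Surjective (P.π.f 0) := by
      rw [← ModuleCat.epi_iff_surjective]; infer_instance
    obtain ⟨p0, hp0⟩ := hπs (e y)
    have hfy : f p0 = y := by
      show e.symm (P.π.f 0 p0) = y
      rw [hp0, LinearEquiv.symm_apply_apply]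
    rw [hf0] at hfy
    exact hy (by simpa using hfy.symm)
  | succ t =>
    have hM2 : IsZero (I.cocomplex.X (t+2)) :=
      hI (t+2) (by exact_mod_cast (by omega : t + 1 < t + 2))
    have hδtop : I.cocomplex.d (t+1) (t+2) = 0 := hM2.eq_of_tgt _ _
    have hkertop : LinearMap.ker ((I.cocomplex.d (t+1) (t+2)).hom :
        I.cocomplex.X (t+1) →ₗ[R] I.cocomplex.X (t+2)) = ⊤ := by
      rw [eq_top_iff]
      intro x _
      show I.cocomplex.d (t+1) (t+2) x = 0
      rw [hδtop]; rfl
    set E := ModuleCat.of R ↥(LinearMap.ker ((I.cocomplex.d (t+1) (t+2)).hom :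
      I.cocomplex.X (t+1) →ₗ[R] I.cocomplex.X (t+2))) with hE
    have eE : (↥(LinearMap.ker ((I.cocomplex.d (t+1) (t+2)).hom :
        I.cocomplex.X (t+1) →ₗ[R] I.cocomplex.X (t+2)))) ≃ₗ[R] I.cocomplex.X (t+1) :=
      (LinearEquiv.ofEq _ _ hkertop).trans Submodule.topEquiv
    have instE : Injective E := Injective.of_iso eE.toModuleIso.symm (I.injective (t+1))
    refine ⟨E, instE, ?_⟩
    intro hs
    set P := ProjectiveResolution.of E with hP
    have hzero : IsZero (((Ext R (ModuleCat.{u} R) (t+1)).obj (Opposite.op E)).obj N) :=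
      @ModuleCat.isZero_of_subsingleton R _ _ hs
    have hz : IsZero ((P.complex.linearYonedaObj R N).homology (t+1)) :=
      IsZero.of_iso hzero (P.isoExt (t+1) N).symm
    have hexN : exd P N t := (exd_iff P N t).1
      ((HomologicalComplex.exactAt_iff_isZero_homology _ (t+1)).2 hz)
    have hmemη : ∀ y : N, I.ι.f 0 y ∈ LinearMap.ker ((I.cocomplex.d 0 1).hom :
        I.cocomplex.X 0 →ₗ[R] I.cocomplex.X 1) := by
      intro y
      show I.cocomplex.d 0 1 (I.ι.f 0 y) = 0
      show (I.ι.f 0 ≫ I.cocomplex.d 0 1) y = 0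
      rw [I.ι_f_zero_comp_complex_d]; rfl
    have hηinj : Function.Injective (I.ι.f 0) :=
      (ModuleCat.mono_iff_injective _).1 inferInstance
    have w : N ≅ ModuleCat.of R ↥(LinearMap.ker ((I.cocomplex.d 0 1).hom :
        I.cocomplex.X 0 →ₗ[R] I.cocomplex.X 1)) :=
      (LinearEquiv.ofBijective (LinearMap.codRestrict _
          ((I.ι.f 0).hom : N →ₗ[R] I.cocomplex.X 0) hmemη)
        ⟨fun a b hab => hηinj (congrArg Subtype.val hab),
         fun b => by
           obtain ⟨y, hy⟩ := ker_sub_range I b.val b.2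
           exact ⟨y, Subtype.ext hy⟩⟩).toModuleIso
    have hexK0 := exd_of_iso P w t hexN
    have hchain := exd_ker_chain I P t hexK0 t (le_refl t)
    rw [Nat.sub_self] at hchain
    obtain ⟨σ, hσ⟩ := splitting_of_exd P (kerIncl I t) (kerProj I t) (kerIncl_injective I t)
      (kerProj_surjective I t) (kerProj_kerIncl I t) (kerProj_exact I t) hchain
    have hvσ : ∀ z : E, kerProj I t (σ z) = z := by
      intro z
      exact congrArg (fun (φ : E ⟶ E) => φ z) hσ
    have hmemr : ∀ x : I.cocomplex.X t,
        x - σ (kerProj I t x) ∈ LinearMap.ker ((I.cocomplex.d t (t+1)).hom :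
          I.cocomplex.X t →ₗ[R] I.cocomplex.X (t+1)) := by
      intro x
      show I.cocomplex.d t (t+1) (x - σ (kerProj I t x)) = 0
      rw [map_sub]
      have h1 : I.cocomplex.d t (t+1) (σ (kerProj I t x)) =
          I.cocomplex.d t (t+1) x := congrArg Subtype.val (hvσ (kerProj I t x))
      rw [h1, sub_self]
    set rr : I.cocomplex.X t ⟶ ModuleCat.of R ↥(LinearMap.ker ((I.cocomplex.d t (t+1)).hom :
        I.cocomplex.X t →ₗ[R] I.cocomplex.X (t+1))) :=
      ModuleCat.ofHom (LinearMap.codRestrict _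
        ((LinearMap.id : I.cocomplex.X t →ₗ[R] I.cocomplex.X t) -
          ((σ.hom : E →ₗ[R] I.cocomplex.X t).comp
            ((kerProj I t).hom : I.cocomplex.X t →ₗ[R] E))) hmemr) with hrr
    have hrs : kerIncl I t ≫ rr = 𝟙 _ := by
      ext a
      show a.val - σ (kerProj I t (kerIncl I t a)) = a.val
      rw [kerProj_kerIncl, map_zero, sub_zero]
    have hKinj : Injective (ModuleCat.of R ↥(LinearMap.ker ((I.cocomplex.d t (t+1)).hom :
        I.cocomplex.X t →ₗ[R] I.cocomplex.X (t+1)))) :=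
      injective_of_retract rr (kerIncl I t) hrs (I.injective t)
    obtain ⟨J, hJ⟩ := truncatedResolution I t hKinj
    apply hlt
    exact ⟨J, fun m hm => hJ m (by omega)⟩
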